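/- arXiv:1212.5138 — 3 statements merged into one kernel-verified Lean document; each statement's English description precedes it below -/
import Mathlib

section
/- Let Γ ⊆ ℂ be an additive subgroup, let h : Γ → ℂ∖{0} be a group homomorphism into the multiplicative group that is not identically 1, and let P ⊆ ℂ be a closed discrete subset with P + γ = P for all γ ∈ Γ. Let g : ℂ → ℂ be holomorphic on ℂ∖P and meromorphic at every point of P, and assume g(z + γ) = g(z)·h(γ) for all z ∈ ℂ∖P and γ ∈ Γ. Assume all residues of g vanish, i.e., for every q ∈ P there is ε > 0 such that for all 0 < ρ < ε the circle integral of g over the circle of radius ρ centered at q is 0. Then there exists a function f : ℂ∖P → ℂ that is holomorphic on ℂ∖P, meromorphic at every point of P, and satisfies f′(z) = g(z) for all z ∈ ℂ∖P and f(z + γ) = f(z)·h(γ) for all z ∈ ℂ∖P and γ ∈ Γ; moreover f is the unique function on ℂ∖P with these properties. -/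
/-!
Vanishing residues make every principal part of `g` the derivative of a function that is
holomorphic off its pole and meromorphic at it. On a disc, subtracting these derivatives at the
finitely many poles leaves a holomorphic function, which has a primitive (Morera); the complement
of a countable set in a disc is connected, so these primitives agree up to constants and glue to a
primitive `F` of `g` on `ℂ ∖ P`, meromorphic at `P`.

As `ℂ ∖ P` is connected and `g` has monodromy `h`, `F (z + γ) - h γ * F z` is a constant `b γ`.
Translating by `γ` and `γ₀` in both orders gives `b γ * (h γ₀ - 1) = b γ₀ * (h γ - 1)`, so with
`h γ₀ ≠ 1` and `a = b γ₀ / (h γ₀ - 1)` the function `F + a` has monodromy `h`. Two such primitives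
differ by a constant `d` with `d = d * h γ₀`, hence agree.
-/

open Complex Filter Set Topology Metric

/-- `f` is a primitive of `g` away from `P`, holomorphic on `ℂ∖P`, meromorphic at every
point of `P`, and has multiplicative monodromy `h` with respect to the subgroup `Γ`. -/
def IsMonodromyPrimitive (P : Set ℂ) (Γ : AddSubgroup ℂ) (h : Γ → ℂ) (g f : ℂ → ℂ) : Prop :=
  DifferentiableOn ℂ f Pᶜ ∧
  (∀ q ∈ P, MeromorphicAt f q) ∧
  (∀ z ∉ P, HasDerivAt f (g z) z) ∧
  (∀ z ∉ P, ∀ γ : Γ, f (z + (γ : ℂ)) = f z * h γ)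

theorem isPreconnected_ball_diff_countable {E : Type*} [NormedAddCommGroup E] [NormedSpace ℝ E]
    (h : 1 < Module.rank ℝ E) (c : E) (r : ℝ) {s : Set E} (hs : s.Countable) :
    IsPreconnected (ball c r \ s) := by
  rcases le_or_gt r 0 with hr | hr
  · simp [ball_eq_empty.2 hr, isPreconnected_empty]
  set e := OpenPartialHomeomorph.univBall c r
  have hcount : (e ⁻¹' s).Countable :=
    hs.preimage_of_injOn (e.injOn.mono fun x _ => by simp [e])
  have himage : e '' (e ⁻¹' s)ᶜ = ball c r \ s := by
    rw [← preimage_compl, ← univ_inter (e ⁻¹' sᶜ), ← OpenPartialHomeomorph.univBall_source c r,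
      e.image_source_inter_eq', ← OpenPartialHomeomorph.univBall_target c hr,
      e.target_inter_inv_preimage_preimage, sdiff_eq]
  rw [← himage]
  exact ((hcount.isConnected_compl_of_one_lt_rank h).image _
    (OpenPartialHomeomorph.continuous_univBall c r).continuousOn).isPreconnected

theorem IsOpen.exists_eq_const_of_hasDerivAt_zero {𝕜 G : Type*} [RCLike 𝕜] [NormedAddCommGroup G]
    [NormedSpace 𝕜 G] {s : Set 𝕜} (hs : IsOpen s) (hs' : IsPreconnected s) {f : 𝕜 → G}
    (hf : ∀ x ∈ s, HasDerivAt f 0 x) : ∃ a, ∀ x ∈ s, f x = a :=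
  hs.exists_is_const_of_deriv_eq_zero hs'
    (fun x hx => (hf x hx).differentiableAt.differentiableWithinAt) fun x hx => (hf x hx).deriv

theorem circleIntegral_deriv_eq_zero {U : Set ℂ} (hU : IsOpen U) {f : ℂ → ℂ}
    (hf : DifferentiableOn ℂ f U) {c : ℂ} {R : ℝ} (hR : sphere c |R| ⊆ U) :
    (∮ z in C(c, R), deriv f z) = 0 := by
  have hmem (θ : ℝ) : circleMap c R θ ∈ U := hR (circleMap_mem_sphere' c R θ)
  have hderiv (θ : ℝ) : HasDerivAt (f ∘ circleMap c R)
      (deriv f (circleMap c R θ) * (circleMap 0 R θ * I)) θ :=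
    (hf.differentiableAt (hU.mem_nhds (hmem θ))).hasDerivAt.comp θ (hasDerivAt_circleMap c R θ)
  have hcont : Continuous fun θ => deriv f (circleMap c R θ) * (circleMap 0 R θ * I) :=
    ((hf.deriv hU).continuousOn.comp_continuous (continuous_circleMap c R) hmem).mul
      ((continuous_circleMap 0 R).mul continuous_const)
  simp only [circleIntegral, deriv_circleMap, smul_eq_mul, mul_comm (circleMap 0 R _ * I)]
  rw [intervalIntegral.integral_eq_sub_of_hasDerivAt (fun θ _ => hderiv θ)
    (hcont.intervalIntegrable _ _), Function.comp_apply, Function.comp_apply,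
    (periodic_circleMap c R).eq, sub_self]

/-- `c` is the residue of `g` at `q`, and `p` a primitive of the rest of its principal part. -/
def IsPrincipalPrimitive (g : ℂ → ℂ) (q c : ℂ) (p : ℂ → ℂ) : Prop :=
  DifferentiableOn ℂ p {q}ᶜ ∧ MeromorphicAt p q ∧
    ∃ e : ℂ → ℂ, AnalyticAt ℂ e q ∧ ∀ᶠ z in 𝓝[≠] q, g z = c * (z - q)⁻¹ + deriv p z + e z

namespace IsPrincipalPrimitive

variable {g g₁ g₂ p p₁ p₂ : ℂ → ℂ} {q c c₁ c₂ : ℂ}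

theorem congr (h : IsPrincipalPrimitive g₁ q c p) (hg : g₁ =ᶠ[𝓝[≠] q] g₂) :
    IsPrincipalPrimitive g₂ q c p := by
  obtain ⟨hp, hpm, e, he, hge⟩ := h
  exact ⟨hp, hpm, e, he, hg.symm.trans hge⟩

theorem add (h₁ : IsPrincipalPrimitive g₁ q c₁ p₁) (h₂ : IsPrincipalPrimitive g₂ q c₂ p₂) :
    IsPrincipalPrimitive (fun z => g₁ z + g₂ z) q (c₁ + c₂) (fun z => p₁ z + p₂ z) := by
  obtain ⟨hp₁, hpm₁, e₁, he₁, hge₁⟩ := h₁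
  obtain ⟨hp₂, hpm₂, e₂, he₂, hge₂⟩ := h₂
  refine ⟨hp₁.add hp₂, hpm₁.add hpm₂, fun z => e₁ z + e₂ z, he₁.add he₂, ?_⟩
  filter_upwards [hge₁, hge₂, self_mem_nhdsWithin] with z hz₁ hz₂ hz
  have hnhds : {q}ᶜ ∈ 𝓝 z := isOpen_compl_singleton.mem_nhds hz
  rw [hz₁, hz₂, deriv_fun_add (hp₁.differentiableAt hnhds) (hp₂.differentiableAt hnhds)]
  ring

theorem const_mul (h : IsPrincipalPrimitive g q c p) (a : ℂ) :
    IsPrincipalPrimitive (fun z => a * g z) q (a * c) (fun z => a * p z) := by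
  obtain ⟨hp, hpm, e, he, hge⟩ := h
  refine ⟨hp.const_mul a, (MeromorphicAt.const a q).mul hpm, fun z => a * e z,
    analyticAt_const.mul he, ?_⟩
  filter_upwards [hge] with z hz
  rw [hz, deriv_const_mul_field']
  ring

end IsPrincipalPrimitive

theorem AnalyticAt.isPrincipalPrimitive {g : ℂ → ℂ} {q : ℂ} (hg : AnalyticAt ℂ g q) :
    IsPrincipalPrimitive g q 0 0 :=
  ⟨differentiableOn_const 0, MeromorphicAt.const 0 q, g, hg, by simp⟩

theorem exists_isPrincipalPrimitive_sub_zpow (q : ℂ) (m : ℤ) :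
    ∃ c p, IsPrincipalPrimitive (fun z => (z - q) ^ m) q c p := by
  by_cases hm : m = -1
  · refine ⟨1, 0, differentiableOn_const 0, MeromorphicAt.const 0 q, 0, analyticAt_const, ?_⟩
    simp [hm]
  have hm' : (m + 1 : ℂ) ≠ 0 := by exact_mod_cast (show m + 1 ≠ 0 by omega)
  have hderiv : ∀ z ≠ q,
      HasDerivAt (fun z => (m + 1 : ℂ)⁻¹ * (z - q) ^ (m + 1)) ((z - q) ^ m) z := by
    intro z hz
    refine (((hasDerivAt_zpow (m + 1) (z - q) (Or.inl (sub_ne_zero.2 hz))).comp z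
      ((hasDerivAt_id z).sub_const q)).const_mul (m + 1 : ℂ)⁻¹).congr_deriv ?_
    push_cast
    rw [add_sub_cancel_right, mul_one, inv_mul_cancel_left₀ hm']
  refine ⟨0, fun z => (m + 1 : ℂ)⁻¹ * (z - q) ^ (m + 1),
    fun z hz => (hderiv z hz).differentiableAt.differentiableWithinAt,
    (MeromorphicAt.const _ q).mul (((MeromorphicAt.id q).sub (MeromorphicAt.const q q)).zpow _),
    0, analyticAt_const, ?_⟩
  filter_upwards [self_mem_nhdsWithin] with z hz
  simp [(hderiv z hz).deriv]

theorem exists_isPrincipalPrimitive_sub_zpow_neg_mul {q : ℂ} (n : ℕ) {A : ℂ → ℂ}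
    (hA : AnalyticAt ℂ A q) :
    ∃ c p, IsPrincipalPrimitive (fun z => (z - q) ^ (-(n : ℤ)) * A z) q c p := by
  induction n generalizing A with
  | zero => exact ⟨0, 0, hA.isPrincipalPrimitive.congr (by simp)⟩
  | succ n ih =>
    obtain ⟨P, hP⟩ := hA
    obtain ⟨c₁, p₁, h₁⟩ := ih ⟨_, hP.has_fpower_series_dslope_fslope⟩
    obtain ⟨c₂, p₂, h₂⟩ := exists_isPrincipalPrimitive_sub_zpow q (-(n + 1 : ℕ))
    refine ⟨_, _, (h₂.const_mul (A q)).add h₁ |>.congr ?_⟩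
    filter_upwards [self_mem_nhdsWithin] with z hz
    have hzq : z - q ≠ 0 := sub_ne_zero.2 hz
    have hA : A z = A q + (z - q) * dslope A q z := by
      rw [← smul_eq_mul, sub_smul_dslope]; ring
    rw [hA, zpow_neg, zpow_neg, zpow_natCast, zpow_natCast]
    field_simp
    ring

theorem MeromorphicAt.exists_isPrincipalPrimitive {g : ℂ → ℂ} {q : ℂ} (hg : MeromorphicAt g q) :
    ∃ c p, IsPrincipalPrimitive g q c p := by
  obtain ⟨n, hn⟩ := hg
  obtain ⟨c, p, h⟩ := exists_isPrincipalPrimitive_sub_zpow_neg_mul n hn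
  refine ⟨c, p, h.congr ?_⟩
  filter_upwards [self_mem_nhdsWithin] with z hz
  rw [smul_eq_mul, zpow_neg, zpow_natCast, inv_mul_cancel_left₀ (pow_ne_zero _ (sub_ne_zero.2 hz))]

namespace IsPrincipalPrimitive

variable {g p : ℂ → ℂ} {q c : ℂ}

theorem exists_punctured_primitive (h : IsPrincipalPrimitive g q c p) :
    ∃ r > 0, ∃ P : ℂ → ℂ, MeromorphicAt P q ∧ DifferentiableOn ℂ P (ball q r \ {q}) ∧
      ∀ z ∈ ball q r \ {q}, g z = c * (z - q)⁻¹ + deriv P z := by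
  obtain ⟨hp, hpm, e, he, hge⟩ := h
  obtain ⟨r₁, hr₁, he'⟩ := he.exists_ball_analyticOnNhd
  obtain ⟨r₂, hr₂, hge'⟩ := Metric.mem_nhdsWithin_iff.1 hge
  set r := min r₁ r₂
  obtain ⟨E, hE⟩ :=
    (he'.differentiableOn.mono (ball_subset_ball (min_le_left r₁ r₂))).isExactOn_ball
  have hEd : DifferentiableOn ℂ E (ball q r) := fun z hz =>
    (hE z hz).differentiableAt.differentiableWithinAt
  have hpd : DifferentiableOn ℂ p (ball q r \ {q}) := hp.mono fun _ hz => hz.2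
  refine ⟨r, lt_min hr₁ hr₂, fun z => p z + E z,
    hpm.add (hEd.analyticAt (ball_mem_nhds q (lt_min hr₁ hr₂))).meromorphicAt,
    hpd.add (hEd.mono sdiff_subset), fun z hz => ?_⟩
  have hopen : ball q r \ {q} ∈ 𝓝 z := (isOpen_ball.sdiff isClosed_singleton).mem_nhds hz
  rw [hge' ⟨ball_subset_ball (min_le_right r₁ r₂) hz.1, hz.2⟩,
    deriv_fun_add (hpd.differentiableAt hopen) (hEd.differentiableAt (isOpen_ball.mem_nhds hz.1)),
    (hE z hz.1).deriv, add_assoc]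

theorem eq_zero_of_circleIntegral_eq_zero (h : IsPrincipalPrimitive g q c p)
    (hres : ∀ᶠ ρ in 𝓝[>] 0, (∮ z in C(q, ρ), g z) = 0) : c = 0 := by
  obtain ⟨r, hr, P, -, hP, hg⟩ := h.exists_punctured_primitive
  obtain ⟨ρ, hρ, hρr⟩ := (hres.and (Ioo_mem_nhdsGT hr)).exists
  have hU : IsOpen (ball q r \ {q}) := isOpen_ball.sdiff isClosed_singleton
  have hsphere : sphere q ρ ⊆ ball q r \ {q} := fun z hz =>
    ⟨mem_ball.2 (hz ▸ hρr.2), fun hzq => hρr.1.ne' (by rw [← hz, hzq, dist_self])⟩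
  have hsphere' : sphere q |ρ| ⊆ ball q r \ {q} := by rwa [abs_of_pos hρr.1]
  have hinv : CircleIntegrable (fun z => c * (z - q)⁻¹) q ρ :=
    (circleIntegrable_sub_inv_iff.2 (Or.inr fun hq => (hsphere' hq).2 rfl)).const_mul c
  have hder : CircleIntegrable (deriv P) q ρ :=
    ((hP.deriv hU).continuousOn.mono hsphere).circleIntegrable hρr.1.le
  rw [circleIntegral.integral_congr hρr.1.le fun z hz => hg z (hsphere hz),
    circleIntegral.integral_add hinv hder, circleIntegral.integral_const_mul,
    circleIntegral.integral_sub_inv_of_mem_ball (mem_ball_self hρr.1),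
    circleIntegral_deriv_eq_zero hU hP hsphere', add_zero] at hρ
  exact (mul_eq_zero.1 hρ).resolve_right two_pi_I_ne_zero

theorem exists_differentiableAt_eqOn_sub_deriv (h : IsPrincipalPrimitive g q 0 p) :
    ∃ g₁ : ℂ → ℂ, DifferentiableAt ℂ g₁ q ∧ EqOn g₁ (fun z => g z - deriv p z) {q}ᶜ := by
  obtain ⟨-, -, e, he, hge⟩ := h
  refine ⟨Function.update (fun z => g z - deriv p z) q (e q), ?_,
    fun z hz => Function.update_of_ne hz _ _⟩
  have hne : Function.update (fun z => g z - deriv p z) q (e q) =ᶠ[𝓝[≠] q] e := by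
    filter_upwards [hge, self_mem_nhdsWithin] with z hz hzq
    rw [Function.update_of_ne hzq, hz]
    ring
  exact ((eventuallyEq_nhds_of_eventuallyEq_nhdsNE hne (Function.update_self _ _ _)
    ).differentiableAt_iff).2 he.differentiableAt

theorem meromorphicAt_of_hasDerivAt (h : IsPrincipalPrimitive g q 0 p) {F : ℂ → ℂ}
    (hF : ∀ᶠ z in 𝓝[≠] q, HasDerivAt F (g z) z) : MeromorphicAt F q := by
  obtain ⟨r₁, hr₁, P, hPm, hP, hg⟩ := h.exists_punctured_primitive
  obtain ⟨r₂, hr₂, hF'⟩ := Metric.mem_nhdsWithin_iff.1 hF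
  set U := ball q (min r₁ r₂) \ {q}
  have hU : IsOpen U := isOpen_ball.sdiff isClosed_singleton
  obtain ⟨a, ha⟩ := hU.exists_eq_const_of_hasDerivAt_zero
    (isPreconnected_ball_diff_countable (by simp) q _ (countable_singleton q))
    (f := fun z => F z - P z) fun z hz => by
      have hz₁ : z ∈ ball q r₁ \ {q} := ⟨ball_subset_ball (min_le_left _ _) hz.1, hz.2⟩
      have hFz : HasDerivAt F (g z) z := hF' ⟨ball_subset_ball (min_le_right _ _) hz.1, hz.2⟩
      rw [hg z hz₁, zero_mul, zero_add] at hFz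
      simpa using hFz.fun_sub (hP.differentiableAt
        ((isOpen_ball.sdiff isClosed_singleton).mem_nhds hz₁)).hasDerivAt
  refine (hPm.add (MeromorphicAt.const a q)).congr ?_
  filter_upwards [inter_mem_nhdsWithin {q}ᶜ (ball_mem_nhds q (lt_min hr₁ hr₂))] with z hz
  show P z + a = F z
  linear_combination -ha z ⟨hz.2, hz.1⟩

end IsPrincipalPrimitive

theorem MeromorphicAt.exists_isPrincipalPrimitive_zero {g : ℂ → ℂ} {q : ℂ}
    (hg : MeromorphicAt g q) (hres : ∀ᶠ ρ in 𝓝[>] 0, (∮ z in C(q, ρ), g z) = 0) :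
    ∃ p, IsPrincipalPrimitive g q 0 p := by
  obtain ⟨c, p, hcp⟩ := hg.exists_isPrincipalPrimitive
  exact ⟨p, hcp.eq_zero_of_circleIntegral_eq_zero hres ▸ hcp⟩

theorem isExactOn_ball_diff_of_finite {c : ℂ} {R : ℝ} {Q : Set ℂ} (hQ : Q.Finite) {g : ℂ → ℂ}
    (hg : DifferentiableOn ℂ g (ball c R \ Q))
    (hprin : ∀ q ∈ Q, ∃ p, IsPrincipalPrimitive g q 0 p) : IsExactOn g (ball c R \ Q) := by
  induction Q, hQ using Set.Finite.induction_on generalizing g with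
  | empty => simpa using (hg.mono (by simp)).isExactOn_ball
  | @insert q Q hqQ hQ ih =>
    obtain ⟨p, hpq⟩ := hprin q (mem_insert q Q)
    have hp : DifferentiableOn ℂ p {q}ᶜ := hpq.1
    have hdp : DifferentiableOn ℂ (deriv p) {q}ᶜ := hp.deriv isOpen_compl_singleton
    obtain ⟨g₁, hg₁q, hg₁'⟩ := hpq.exists_differentiableAt_eqOn_sub_deriv
    have hg₁ : ∀ z ≠ q, g₁ =ᶠ[𝓝 z] fun z => g z - deriv p z := fun z hz =>
      hg₁'.eventuallyEq_of_mem (isOpen_compl_singleton.mem_nhds hz)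
    have hg₁d : DifferentiableOn ℂ g₁ (ball c R \ Q) := fun z hz => by
      rcases eq_or_ne z q with rfl | hzq
      · exact hg₁q.differentiableWithinAt
      refine ((hg₁ z hzq).differentiableAt_iff.2 ?_).differentiableWithinAt
      have hzQ : z ∈ ball c R \ insert q Q := ⟨hz.1, by simp [hzq, hz.2]⟩
      exact (hg.differentiableAt ((isOpen_ball.sdiff (hQ.insert q).isClosed).mem_nhds hzQ)).sub
        (hdp.differentiableAt (isOpen_compl_singleton.mem_nhds hzq))
    have hprin₁ : ∀ q' ∈ Q, ∃ p', IsPrincipalPrimitive g₁ q' 0 p' := fun q' hq' => by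
      obtain ⟨p', hp'⟩ := hprin q' (mem_insert_of_mem q hq')
      have hq'q : q' ≠ q := fun h => hqQ (h ▸ hq')
      refine ⟨fun z => p' z + 0, ?_⟩
      simpa using (hp'.add ((hdp.analyticAt (isOpen_compl_singleton.mem_nhds hq'q)).neg
        |>.isPrincipalPrimitive)).congr (nhdsWithin_le_nhds (hg₁ q' hq'q).symm)
    obtain ⟨G, hG⟩ := ih hg₁d hprin₁
    refine ⟨fun z => G z + p z, fun z hz => ?_⟩
    have hzq : z ≠ q := fun h => hz.2 (h ▸ mem_insert q Q)
    have hGz := hG z ⟨hz.1, fun h => hz.2 (mem_insert_of_mem q h)⟩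
    rw [(hg₁ z hzq).eq_of_nhds] at hGz
    simpa using hGz.fun_add (hp.differentiableAt (isOpen_compl_singleton.mem_nhds hzq)).hasDerivAt

theorem isExactOn_compl_of_forall_ball {s : Set ℂ} (hs : s.Countable) (hs' : IsClosed s)
    {g : ℂ → ℂ} (h : ∀ R, IsExactOn g (ball 0 R \ s)) : IsExactOn g sᶜ := by
  obtain ⟨z₀, hz₀⟩ := (hs.dense_compl ℝ).nonempty
  choose F hF₀ hF using fun R => (h R).with_val_at z₀ 0
  have hagree : ∀ R R', ‖z₀‖ < R → ‖z₀‖ < R' → ∀ z ∈ ball 0 (min R R') \ s, F R z = F R' z := by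
    intro R R' hR hR' z hz
    have hopen : IsOpen (ball (0 : ℂ) (min R R') \ s) := isOpen_ball.sdiff hs'
    obtain ⟨a, ha⟩ := hopen.exists_eq_const_of_hasDerivAt_zero
      (isPreconnected_ball_diff_countable (by simp) 0 _ hs) (f := fun z => F R z - F R' z)
      fun w hw => by
        simpa using (hF R w ⟨ball_subset_ball (min_le_left R R') hw.1, hw.2⟩).fun_sub
          (hF R' w ⟨ball_subset_ball (min_le_right R R') hw.1, hw.2⟩)
    have ha₀ := ha z₀ ⟨mem_ball_zero_iff.2 (lt_min hR hR'), hz₀⟩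
    rw [hF₀, hF₀, sub_self] at ha₀
    exact sub_eq_zero.1 ((ha z hz).trans ha₀.symm)
  -- at `z`, use the primitive on a ball that contains both `z` and the base point `z₀`
  set ρ : ℂ → ℝ := fun z => ‖z‖ + ‖z₀‖ + 1
  have hρ : ∀ z, ‖z‖ < ρ z ∧ ‖z₀‖ < ρ z := fun z => by
    constructor <;> simp only [ρ] <;> linarith [norm_nonneg z, norm_nonneg z₀]
  refine ⟨fun z => F (ρ z) z, fun z hz => ?_⟩
  have hnhds : ball 0 (ρ z) \ s ∈ 𝓝 z :=
    (isOpen_ball.sdiff hs').mem_nhds ⟨mem_ball_zero_iff.2 (hρ z).1, hz⟩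
  refine (hF (ρ z) z ⟨mem_ball_zero_iff.2 (hρ z).1, hz⟩).congr_of_eventuallyEq ?_
  filter_upwards [hnhds] with w hw
  exact hagree _ _ (hρ w).2 (hρ z).2 w
    ⟨mem_ball_zero_iff.2 (lt_min (hρ w).1 (mem_ball_zero_iff.1 hw.1)), hw.2⟩

section Monodromy

variable {U : Set ℂ}

theorem exists_add_const_monodromy (hU : IsOpen U) (hU' : IsPreconnected U) {ι : Type*}
    {τ h : ι → ℂ} (hτ : ∀ i, ∀ z ∈ U, z + τ i ∈ U)
    {F g : ℂ → ℂ} (hF : ∀ z ∈ U, HasDerivAt F (g z) z)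
    (hg : ∀ z ∈ U, ∀ i, g (z + τ i) = g z * h i) {i₀ : ι} (hi₀ : h i₀ ≠ 1) :
    ∃ a, ∀ z ∈ U, ∀ i, F (z + τ i) + a = (F z + a) * h i := by
  rcases U.eq_empty_or_nonempty with rfl | ⟨z₀, hz₀⟩
  · exact ⟨0, by simp⟩
  have hconst : ∀ i, ∃ b, ∀ z ∈ U, F (z + τ i) - h i * F z = b := fun i =>
    hU.exists_eq_const_of_hasDerivAt_zero hU' fun z hz => by
      have hshift : HasDerivAt (fun w => F (w + τ i)) (g (z + τ i)) z := by
        simpa using (hF _ (hτ i z hz)).comp_add_const z (τ i)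
      simpa [hg z hz i, mul_comm] using hshift.fun_sub ((hF z hz).const_mul (h i))
  choose b hb using hconst
  -- evaluating `F (z₀ + τ i + τ i₀)` in two ways gives the cocycle relation for `b`
  have hcocycle : ∀ i, b i * (h i₀ - 1) = b i₀ * (h i - 1) := fun i => by
    have e₁ := hb i₀ _ (hτ i z₀ hz₀)
    have e₂ := hb i _ (hτ i₀ z₀ hz₀)
    rw [add_right_comm] at e₂
    linear_combination e₂ - e₁ - h i₀ * hb i z₀ hz₀ + h i * hb i₀ z₀ hz₀
  have hi₀' : h i₀ - 1 ≠ 0 := sub_ne_zero.2 hi₀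
  refine ⟨b i₀ / (h i₀ - 1), fun z hz i => ?_⟩
  have hbi : b i = b i₀ / (h i₀ - 1) * (h i - 1) := by
    rw [div_mul_eq_mul_div, eq_div_iff hi₀', hcocycle]
  linear_combination hb i z hz + hbi

theorem eqOn_of_hasDerivAt_of_map_add (hU : IsOpen U) (hU' : IsPreconnected U) {τ μ : ℂ}
    (hτ : ∀ z ∈ U, z + τ ∈ U) (hμ : μ ≠ 1)
    {F₁ F₂ g : ℂ → ℂ} (hF₁ : ∀ z ∈ U, HasDerivAt F₁ (g z) z) (hF₂ : ∀ z ∈ U, HasDerivAt F₂ (g z) z)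
    (hm₁ : ∀ z ∈ U, F₁ (z + τ) = F₁ z * μ) (hm₂ : ∀ z ∈ U, F₂ (z + τ) = F₂ z * μ) :
    EqOn F₁ F₂ U := by
  obtain ⟨a, ha⟩ := hU.exists_eq_const_of_hasDerivAt_zero hU' (f := fun z => F₁ z - F₂ z)
    fun z hz => by simpa using (hF₁ z hz).fun_sub (hF₂ z hz)
  intro z hz
  have hshift := ha _ (hτ z hz)
  rw [hm₁ z hz, hm₂ z hz, ← sub_mul, ha z hz] at hshift
  have ha0 : a = 0 := by
    rcases mul_eq_zero.1 (show a * (μ - 1) = 0 by linear_combination hshift) with h | h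
    · exact h
    · exact absurd (sub_eq_zero.1 h) hμ
  exact sub_eq_zero.1 (ha0 ▸ ha z hz)

end Monodromy

theorem integration_preserving_monodromy_general
    (Γ : AddSubgroup ℂ) (h : Γ → ℂ)
    (hnontriv : ∃ γ : Γ, h γ ≠ 1)
    (P : Set ℂ) (hPclosed : IsClosed P) (hPdisc : DiscreteTopology P)
    (hPinv : ∀ γ : Γ, (fun z => z + (γ : ℂ)) '' P = P)
    (g : ℂ → ℂ)
    (hg : DifferentiableOn ℂ g Pᶜ)
    (hgmer : ∀ q ∈ P, MeromorphicAt g q)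
    (hgmon : ∀ z ∉ P, ∀ γ : Γ, g (z + (γ : ℂ)) = g z * h γ)
    (hres : ∀ q ∈ P, ∃ ε > 0, ∀ ρ : ℝ, 0 < ρ → ρ < ε →
      (∮ z in C(q, ρ), g z) = 0) :
    ∃ f : ℂ → ℂ, IsMonodromyPrimitive P Γ h g f ∧
      ∀ f' : ℂ → ℂ, IsMonodromyPrimitive P Γ h g f' → ∀ z ∉ P, f' z = f z := by
  obtain ⟨γ₀, hγ₀⟩ := hnontriv
  have hPd : IsDiscrete P := isDiscrete_iff_discreteTopology.2 hPdisc
  have hPc : P.Countable := (HereditarilyLindelofSpace.isLindelof P).countable_of_isDiscrete hPd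
  have hU : IsPreconnected Pᶜ := (hPc.isConnected_compl_of_one_lt_rank (by simp)).isPreconnected
  have hτ : ∀ γ : Γ, ∀ z ∈ Pᶜ, z + γ ∈ Pᶜ := fun γ z hz hzγ => hz <| by
    rw [← hPinv γ, image_add_right] at hzγ
    simpa using hzγ
  have hprin : ∀ q ∈ P, ∃ p, IsPrincipalPrimitive g q 0 p := fun q hq => by
    obtain ⟨ε, hε, hε'⟩ := hres q hq
    exact (hgmer q hq).exists_isPrincipalPrimitive_zero
      (eventually_of_mem (Ioo_mem_nhdsGT hε) fun ρ hρ => hε' ρ hρ.1 hρ.2)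
  obtain ⟨F, hF⟩ : IsExactOn g Pᶜ := isExactOn_compl_of_forall_ball hPc hPclosed fun R => by
    rw [← sdiff_self_inter]
    exact isExactOn_ball_diff_of_finite
      (Metric.finite_isBounded_inter_isClosed hPd isBounded_ball hPclosed)
      (hg.mono fun z hz hzP => hz.2 ⟨hz.1, hzP⟩) fun q hq => hprin q hq.2
  obtain ⟨a, ha⟩ := exists_add_const_monodromy hPclosed.isOpen_compl hU hτ hF hgmon hγ₀
  have hFa : ∀ z ∉ P, HasDerivAt (fun z => F z + a) (g z) z := fun z hz => (hF z hz).add_const a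
  refine ⟨fun z => F z + a, ⟨fun z hz => (hFa z hz).differentiableAt.differentiableWithinAt,
    fun q hq => ?_, hFa, ha⟩, fun f' hf' => ?_⟩
  · obtain ⟨p, hp⟩ := hprin q hq
    refine hp.meromorphicAt_of_hasDerivAt ?_
    have hPq : Pᶜ ∈ 𝓝[≠] q := inf_principal_eq_bot.1 (isDiscrete_iff_nhdsNE.1 hPd q hq)
    filter_upwards [hPq] using hFa
  · exact eqOn_of_hasDerivAt_of_map_add hPclosed.isOpen_compl hU (hτ γ₀) hγ₀ hf'.2.2.1 hFa
      (fun z hz => hf'.2.2.2 z hz γ₀) (fun z hz => ha z hz γ₀)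

/-- A meromorphic function `g` on a torus (i.e. with additive periods `Γ`) with
non-trivial multiplicative monodromy `h`, poles contained in the closed discrete
`Γ`-invariant set `P`, and vanishing residues, has a unique primitive with the
same multiplicative monodromy `h`. -/
theorem integration_preserving_monodromy
    (Γ : AddSubgroup ℂ) (h : Γ → ℂ)
    (hhom : ∀ γ₁ γ₂ : Γ, h (γ₁ + γ₂) = h γ₁ * h γ₂)
    (hne : ∀ γ : Γ, h γ ≠ 0)
    (hnontriv : ∃ γ : Γ, h γ ≠ 1)
    (P : Set ℂ) (hPclosed : IsClosed P) (hPdisc : DiscreteTopology P)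
    (hPinv : ∀ γ : Γ, (fun z => z + (γ : ℂ)) '' P = P)
    (g : ℂ → ℂ)
    (hg : DifferentiableOn ℂ g Pᶜ)
    (hgmer : ∀ q ∈ P, MeromorphicAt g q)
    (hgmon : ∀ z ∉ P, ∀ γ : Γ, g (z + (γ : ℂ)) = g z * h γ)
    (hres : ∀ q ∈ P, ∃ ε > 0, ∀ ρ : ℝ, 0 < ρ → ρ < ε →
      (∮ z in C(q, ρ), g z) = 0) :
    ∃ f : ℂ → ℂ, IsMonodromyPrimitive P Γ h g f ∧
      ∀ f' : ℂ → ℂ, IsMonodromyPrimitive P Γ h g f' → ∀ z ∉ P, f' z = f z :=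
  integration_preserving_monodromy_general Γ h hnontriv P hPclosed hPdisc hPinv g hg hgmer hgmon
    hres
end

section
/- Let Γ ⊆ ℂ be an additive subgroup, let h : Γ → ℂ∖{0} be a group homomorphism into the multiplicative group that is not identically 1, let S ⊆ ℂ be nonempty with S + γ = S for all γ ∈ Γ, and let f : S → ℂ and a : Γ → ℂ satisfy f(z + γ) = f(z)·h(γ) + a(γ) for all z ∈ S and γ ∈ Γ. Then there exists a unique b ∈ ℂ such that for all z ∈ S and γ ∈ Γ one has f(z + γ) + b = (f(z) + b)·h(γ); equivalently, there is a unique b ∈ ℂ with a(γ) = b·(h(γ) − 1) for all γ ∈ Γ. -/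
/-!
Comparing the two ways of reaching `z + γ₁ + γ₂` from a point `z ∈ S` shows that the additive
periods form a cocycle: `a (γ₁ + γ₂) = a γ₁ * h γ₂ + a γ₂`. Since `Γ` is commutative, swapping
`γ₁` and `γ₂` gives `a γ₁ * (h γ₂ - 1) = a γ₂ * (h γ₁ - 1)`, so fixing `γ₀` with `h γ₀ ≠ 1`
forces `a = b * (h - 1)` with `b = a γ₀ / (h γ₀ - 1)`, and `b` is unique because `h γ₀ - 1 ≠ 0`.
Adding `b` to `f` removes exactly the additive period `b * (h - 1)`.
-/

open Set

section Cocycle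

variable {G K : Type*} [AddCommMagma G] [Field K] {h a : G → K}

theorem cocycle_mul_sub_one_comm (ha : ∀ γ₁ γ₂, a (γ₁ + γ₂) = a γ₁ * h γ₂ + a γ₂) (γ₁ γ₂ : G) :
    a γ₁ * (h γ₂ - 1) = a γ₂ * (h γ₁ - 1) := by
  linear_combination ha γ₂ γ₁ - ha γ₁ γ₂ + congrArg a (add_comm γ₁ γ₂)

theorem existsUnique_eq_mul_sub_one_of_cocycle
    (ha : ∀ γ₁ γ₂, a (γ₁ + γ₂) = a γ₁ * h γ₂ + a γ₂) (hnontriv : ∃ γ, h γ ≠ 1) :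
    ∃! b : K, ∀ γ, a γ = b * (h γ - 1) := by
  obtain ⟨γ₀, hγ₀⟩ := hnontriv
  have hd : h γ₀ - 1 ≠ 0 := sub_ne_zero.mpr hγ₀
  refine ⟨a γ₀ / (h γ₀ - 1), fun γ => ?_, fun b hb => ?_⟩
  · rw [div_mul_eq_mul_div, eq_div_iff hd]
    exact cocycle_mul_sub_one_comm ha γ γ₀
  · rw [eq_div_iff hd, hb γ₀]

end Cocycle

section Monodromy

variable {X K : Type*} [AddGroup X] [CommRing K] {Γ : AddSubgroup X} {h a : Γ → K}
  {S : Set X} {f : X → K}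

theorem cocycle_of_monodromy (hhom : ∀ γ₁ γ₂ : Γ, h (γ₁ + γ₂) = h γ₁ * h γ₂)
    (hS : S.Nonempty) (hSinv : ∀ z ∈ S, ∀ γ : Γ, z + (γ : X) ∈ S)
    (hmon : ∀ z ∈ S, ∀ γ : Γ, f (z + (γ : X)) = f z * h γ + a γ) (γ₁ γ₂ : Γ) :
    a (γ₁ + γ₂) = a γ₁ * h γ₂ + a γ₂ := by
  obtain ⟨z, hz⟩ := hS
  have hsum := hmon z hz (γ₁ + γ₂)
  rw [AddSubgroup.coe_add, ← add_assoc, hmon _ (hSinv z hz γ₁), hmon z hz, hhom] at hsum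
  linear_combination -hsum

theorem monodromy_add_const_iff (hS : S.Nonempty)
    (hmon : ∀ z ∈ S, ∀ γ : Γ, f (z + (γ : X)) = f z * h γ + a γ) (b : K) :
    (∀ z ∈ S, ∀ γ : Γ, f (z + (γ : X)) + b = (f z + b) * h γ) ↔
      ∀ γ : Γ, a γ = b * (h γ - 1) := by
  obtain ⟨z₀, hz₀⟩ := hS
  constructor
  · intro hb γ
    linear_combination hb z₀ hz₀ γ - hmon z₀ hz₀ γ
  · intro hab z hz γ
    rw [hmon z hz, hab]
    ring

end Monodromy

theorem remove_additive_monodromy_general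
    (Γ : AddSubgroup ℂ) (h : Γ → ℂ)
    (hhom : ∀ γ₁ γ₂ : Γ, h (γ₁ + γ₂) = h γ₁ * h γ₂)
    (hnontriv : ∃ γ : Γ, h γ ≠ 1)
    (S : Set ℂ) (hS : S.Nonempty)
    (hSinv : ∀ γ : Γ, (fun z => z + (γ : ℂ)) '' S = S)
    (f : ℂ → ℂ) (a : Γ → ℂ)
    (hmon : ∀ z ∈ S, ∀ γ : Γ, f (z + (γ : ℂ)) = f z * h γ + a γ) :
    (∃! b : ℂ, ∀ z ∈ S, ∀ γ : Γ, f (z + (γ : ℂ)) + b = (f z + b) * h γ) ∧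
    (∃! b : ℂ, ∀ γ : Γ, a γ = b * (h γ - 1)) := by
  have hmaps : ∀ z ∈ S, ∀ γ : Γ, z + (γ : ℂ) ∈ S := fun z hz γ =>
    hSinv γ ▸ mem_image_of_mem _ hz
  have hcoboundary : ∃! b : ℂ, ∀ γ : Γ, a γ = b * (h γ - 1) :=
    existsUnique_eq_mul_sub_one_of_cocycle (cocycle_of_monodromy hhom hS hmaps hmon) hnontriv
  exact ⟨(existsUnique_congr (monodromy_add_const_iff hS hmon)).mpr hcoboundary, hcoboundary⟩

/-- If `f` has multiplicative monodromy `h` (a non-trivial homomorphism into `ℂ∖{0}`)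
up to additive periods `a γ` on a nonempty `Γ`-invariant set `S`, then there is a unique
constant `b` such that `f + b` has pure multiplicative monodromy `h`; equivalently
there is a unique `b` with `a γ = b·(h γ − 1)` for all `γ ∈ Γ`. -/
theorem remove_additive_monodromy
    (Γ : AddSubgroup ℂ) (h : Γ → ℂ)
    (hhom : ∀ γ₁ γ₂ : Γ, h (γ₁ + γ₂) = h γ₁ * h γ₂)
    (hne : ∀ γ : Γ, h γ ≠ 0)
    (hnontriv : ∃ γ : Γ, h γ ≠ 1)
    (S : Set ℂ) (hS : S.Nonempty)
    (hSinv : ∀ γ : Γ, (fun z => z + (γ : ℂ)) '' S = S)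
    (f : ℂ → ℂ) (a : Γ → ℂ)
    (hmon : ∀ z ∈ S, ∀ γ : Γ, f (z + (γ : ℂ)) = f z * h γ + a γ) :
    (∃! b : ℂ, ∀ z ∈ S, ∀ γ : Γ, f (z + (γ : ℂ)) + b = (f z + b) * h γ) ∧
    (∃! b : ℂ, ∀ γ : Γ, a γ = b * (h γ - 1)) :=
  remove_additive_monodromy_general Γ h hhom hnontriv S hS hSinv f a hmon
end

section
/- Let ω₁, ω₃ ∈ ℂ be ℝ-linearly independent, let Γ̃ = {4mω₁ + 4nω₃ : m, n ∈ ℤ}, and let H = (0 + Γ̃) ∪ (2ω₁ + Γ̃) ∪ (2ω₁ + 2ω₃ + Γ̃) ∪ (2ω₃ + Γ̃) be the set of half-period points. Let ε₁, ε₃ ∈ {1, −1} with (ε₁, ε₃) ≠ (1, 1). If s is a holomorphic function on ℂ∖H with s(z + 4ω₁) = ε₁·s(z) and s(z + 4ω₃) = ε₃·s(z) for all z in the domain, and at every point q ∈ H the function s has at most a simple pole with vanishing constant Laurent term at q (i.e., there exists r ∈ ℂ with s(z) − r/(z − q) → 0 as z → q), then s is identically zero. -/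
/-
Take ε₁ = -1 (the case ε₃ = -1 is symmetric) and split s into its even and odd parts. Such a part
f satisfies f(2q - z) = ±f(z) about every half period q, with opposite signs at q and q + 2ω₁.
Where the sign is +, the residue and the linear Laurent coefficient of f at q are odd under the
reflection and so vanish, which with the vanishing constant term gives f(z) = o(z - q). Hence
f(z) f(z + 2ω₁) has removable singularities on H; being Γ̃-periodic it is constant by Liouville,
and it vanishes on H. As ℂ ∖ H is connected, the identity theorem forces f = 0.
-/

open Complex Filter Set Topology

/-- The lattice `Γ̃ = {4mω₁ + 4nω₃ : m, n ∈ ℤ}`. -/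
def lat4 (ω₁ ω₃ : ℂ) : Set ℂ := {z | ∃ m n : ℤ, z = 4 * (m : ℂ) * ω₁ + 4 * (n : ℂ) * ω₃}

/-- The set `H` of the four half periods of `ℂ/Γ̃` together with all their
`Γ̃`-translates. -/
def Hset (ω₁ ω₃ : ℂ) : Set ℂ :=
  lat4 ω₁ ω₃ ∪ (fun γ => 2 * ω₁ + γ) '' lat4 ω₁ ω₃ ∪
    (fun γ => 2 * ω₁ + 2 * ω₃ + γ) '' lat4 ω₁ ω₃ ∪ (fun γ => 2 * ω₃ + γ) '' lat4 ω₁ ω₃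

def SimplePoleNoConstAt (f : ℂ → ℂ) (q : ℂ) : Prop :=
  ∃ r : ℂ, Tendsto (fun z => f z - r / (z - q)) (𝓝[≠] q) (𝓝 0)

namespace SimplePoleNoConstAt

variable {f g : ℂ → ℂ} {q : ℂ}

lemma congr (hf : SimplePoleNoConstAt f q) (hfg : f =ᶠ[𝓝[≠] q] g) : SimplePoleNoConstAt g q := by
  obtain ⟨r, hr⟩ := hf
  exact ⟨r, hr.congr' (hfg.mono fun z hz => by rw [hz])⟩

lemma add (hf : SimplePoleNoConstAt f q) (hg : SimplePoleNoConstAt g q) :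
    SimplePoleNoConstAt (fun z => f z + g z) q := by
  obtain ⟨r, hr⟩ := hf
  obtain ⟨r', hr'⟩ := hg
  exact ⟨r + r', by simpa only [add_div, add_sub_add_comm, add_zero] using hr.add hr'⟩

lemma const_mul (c : ℂ) (hf : SimplePoleNoConstAt f q) :
    SimplePoleNoConstAt (fun z => c * f z) q := by
  obtain ⟨r, hr⟩ := hf
  exact ⟨c * r, by simpa only [mul_sub, mul_div_assoc, mul_zero] using hr.const_mul c⟩

lemma comp_neg (hf : SimplePoleNoConstAt f (-q)) : SimplePoleNoConstAt (fun z => f (-z)) q := by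
  obtain ⟨r, hr⟩ := hf
  refine ⟨-r, (hr.comp Filter.neg_nhdsNE.le).congr fun z => ?_⟩
  rw [Function.comp_apply, show -z - -q = -(z - q) by ring, div_neg, neg_div]

lemma comp_add_const (c : ℂ) (hf : SimplePoleNoConstAt f (q + c)) :
    SimplePoleNoConstAt (fun z => f (z + c)) q := by
  obtain ⟨r, hr⟩ := hf
  have := hr.comp (Filter.map_add_right_nhdsNE (c := c) (a := q)).le
  exact ⟨r, by simpa only [Function.comp_def, add_sub_add_right_eq_sub] using this⟩

lemma tendsto_mul_of_tendsto_div_sub (hf : SimplePoleNoConstAt f q)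
    (hg : Tendsto (fun z => g z / (z - q)) (𝓝[≠] q) (𝓝 0)) :
    Tendsto (fun z => g z * f z) (𝓝[≠] q) (𝓝 0) := by
  obtain ⟨r, hr⟩ := hf
  have hsub : Tendsto (fun z => z - q) (𝓝[≠] q) (𝓝 0) :=
    tendsto_sub_nhds_zero_iff.mpr nhdsWithin_le_nhds
  have hmul : Tendsto (fun z => (z - q) * (f z - r / (z - q)) + r) (𝓝[≠] q) (𝓝 r) := by
    simpa using (hsub.mul hr).add_const r
  have hprod : Tendsto (fun z => g z / (z - q) * ((z - q) * (f z - r / (z - q)) + r))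
      (𝓝[≠] q) (𝓝 0) := by
    simpa using hg.mul hmul
  refine hprod.congr' ?_
  filter_upwards [self_mem_nhdsWithin] with z hz
  field_simp [sub_ne_zero.mpr hz]
  ring

-- Evenness about `q` kills the odd Laurent coefficients: the residue and the linear one.
lemma tendsto_div_sub_of_reflect (hf : SimplePoleNoConstAt f q)
    (hd : ∀ᶠ z in 𝓝[≠] q, DifferentiableAt ℂ f z) (hsym : ∀ z, f (2 * q - z) = f z) :
    Tendsto (fun z => f z / (z - q)) (𝓝[≠] q) (𝓝 0) := by
  obtain ⟨r, hr⟩ := hf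
  have hrefl : Tendsto (fun z => 2 * q - z) (𝓝[≠] q) (𝓝[≠] q) := by
    have := (Filter.map_subLeft_nhdsNE (c := 2 * q) (a := q)).le
    rwa [show 2 * q - q = q by ring] at this
  have hf0 : Tendsto f (𝓝[≠] q) (𝓝 0) := by
    have hsum := (hr.add (hr.comp hrefl)).div_const 2
    rw [add_zero, zero_div] at hsum
    refine hsum.congr' ?_
    filter_upwards [self_mem_nhdsWithin] with z hz
    rw [Function.comp_apply, hsym, show 2 * q - z - q = -(z - q) by ring, div_neg]
    ring
  set g := Function.update f q 0 with hg_def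
  have hgf : ∀ z ≠ q, g =ᶠ[𝓝 z] f := fun z hz => by
    filter_upwards [eventually_ne_nhds hz] with w hw using Function.update_of_ne hw 0 f
  have hg : DifferentiableAt ℂ g q := by
    refine (Complex.analyticAt_of_differentiable_on_punctured_nhds_of_continuousAt ?_
      (continuousAt_update_same.mpr hf0)).differentiableAt
    filter_upwards [hd, self_mem_nhdsWithin] with z hz hzq
    exact hz.congr_of_eventuallyEq (hgf z hzq)
  have hgsym : (fun z => g (2 * q - z)) =ᶠ[𝓝 q] g := .of_forall fun z => by
    rcases eq_or_ne z q with rfl | hz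
    · simp only [show 2 * z - z = z by ring]
    · simp only [hg_def]
      have hz' : 2 * q - z ≠ q := fun h => hz (by linear_combination -h)
      rw [Function.update_of_ne hz, Function.update_of_ne hz', hsym]
  have hg' : deriv g q = 0 := by
    have := hgsym.deriv_eq
    rw [deriv_comp_const_sub, show 2 * q - q = q by ring] at this
    linear_combination -this / 2
  refine (hasDerivAt_iff_tendsto_slope.mp (hg' ▸ hg.hasDerivAt)).congr' ?_
  filter_upwards [self_mem_nhdsWithin] with z hz
  rw [slope_def_field, hg_def, Function.update_of_ne hz, Function.update_self, sub_zero]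

end SimplePoleNoConstAt

lemma Hset_eq_span (ω₁ ω₃ : ℂ) : Hset ω₁ ω₃ = Submodule.span ℤ {2 * ω₁, 2 * ω₃} := by
  ext z
  simp only [SetLike.mem_coe, Submodule.mem_span_pair, zsmul_eq_mul]
  constructor
  · rintro (((⟨m, n, rfl⟩ | ⟨_, ⟨m, n, rfl⟩, rfl⟩) | ⟨_, ⟨m, n, rfl⟩, rfl⟩) | ⟨_, ⟨m, n, rfl⟩, rfl⟩)
    · exact ⟨2 * m, 2 * n, by push_cast; ring⟩
    · exact ⟨2 * m + 1, 2 * n, by push_cast; ring⟩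
    · exact ⟨2 * m + 1, 2 * n + 1, by push_cast; ring⟩
    · exact ⟨2 * m, 2 * n + 1, by push_cast; ring⟩
  · rintro ⟨m, n, rfl⟩
    obtain ⟨a, rfl | rfl⟩ := Int.even_or_odd' m <;> obtain ⟨b, rfl | rfl⟩ := Int.even_or_odd' n
    · exact Or.inl (Or.inl (Or.inl ⟨a, b, by push_cast; ring⟩))
    · exact Or.inr ⟨_, ⟨a, b, rfl⟩, by push_cast; ring⟩
    · exact Or.inl (Or.inl (Or.inr ⟨_, ⟨a, b, rfl⟩, by push_cast; ring⟩))
    · exact Or.inl (Or.inr ⟨_, ⟨a, b, rfl⟩, by push_cast; ring⟩)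

lemma Set.indicator_compl_add_eq_mul {S : Type*} [SetLike S ℂ] [AddSubgroupClass S ℂ] {Λ : S}
    {f : ℂ → ℂ} {p c : ℂ} (hp : p ∈ Λ) (hf : ∀ z ∉ Λ, f (z + p) = c * f z) (z : ℂ) :
    (Λ : Set ℂ)ᶜ.indicator f (z + p) = c * (Λ : Set ℂ)ᶜ.indicator f z := by
  by_cases hz : z ∈ Λ
  · rw [indicator_of_notMem (by simpa using add_mem hz hp), indicator_of_notMem (by simpa),
      mul_zero]
  · rw [indicator_of_mem (by simpa [add_mem_cancel_right hp]), indicator_of_mem (by simpa),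
      hf z hz]

namespace PeriodPair

variable (L : PeriodPair) {f : ℂ → ℂ} {η α β : ℂ}

def double : PeriodPair where
  ω₁ := 2 * L.ω₁
  ω₂ := 2 * L.ω₂
  indep := by
    simpa [two_smul, ← two_mul] using
      (LinearIndependent.pair_smul_iff (S := ℤ) two_ne_zero).mpr L.indep

def swap : PeriodPair := ⟨L.ω₂, L.ω₁, LinearIndependent.pair_symm_iff.mp L.indep⟩

lemma lattice_swap : L.swap.lattice = L.lattice := by
  simp only [lattice, swap, Set.pair_comm]

lemma two_mul_mem_lattice {p : ℂ} (hp : p ∈ L.lattice) : 2 * p ∈ L.lattice := by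
  simpa only [two_mul] using add_mem hp hp

lemma isPreconnected_compl_lattice : IsPreconnected (L.lattice : Set ℂ)ᶜ := by
  have : Countable L.lattice := L.latticeEquivProd.toEquiv.countable_iff.mpr inferInstance
  refine (Set.countable_coe_iff.mp this).isPathConnected_compl_of_one_lt_rank ?_
    |>.isConnected.isPreconnected
  rw [Complex.rank_real_complex]
  norm_num

lemma eventually_notMem_lattice (q : ℂ) : ∀ᶠ z in 𝓝[≠] q, z ∉ L.lattice := by
  filter_upwards [nhdsWithin_le_nhds (L.compl_lattice_sdiff_singleton_mem_nhds q),
    self_mem_nhdsWithin] with z hz hzq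
  exact fun h => hz ⟨h, hzq⟩

lemma differentiable_indicator_compl_lattice {g : ℂ → ℂ}
    (hg : DifferentiableOn ℂ g (L.lattice : Set ℂ)ᶜ)
    (hg0 : ∀ q ∈ L.lattice, Tendsto g (𝓝[≠] q) (𝓝 0)) :
    Differentiable ℂ ((L.lattice : Set ℂ)ᶜ.indicator g) := by
  have hopen : IsOpen (L.lattice : Set ℂ)ᶜ := L.isClosed_lattice.isOpen_compl
  have hoff : ∀ z ∉ L.lattice, DifferentiableAt ℂ ((L.lattice : Set ℂ)ᶜ.indicator g) z :=
    fun z hz => ((hg z hz).differentiableAt (hopen.mem_nhds hz)).congr_of_eventuallyEq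
      (eventuallyEq_of_mem (hopen.mem_nhds hz) fun w hw => indicator_of_mem hw g)
  intro q
  by_cases hq : q ∈ L.lattice
  · refine (Complex.analyticAt_of_differentiable_on_punctured_nhds_of_continuousAt ?_ ?_)
      |>.differentiableAt
    · filter_upwards [L.eventually_notMem_lattice q] with z hz using hoff z hz
    · rw [← continuousWithinAt_compl_self, ContinuousWithinAt,
        indicator_of_notMem (by simpa using hq)]
      refine (hg0 q hq).congr' ?_
      filter_upwards [L.eventually_notMem_lattice q] with z hz
      exact (indicator_of_mem hz g).symm
  · exact hoff q hq

theorem _root_.Differentiable.apply_eq_apply_of_periodic {F : ℂ → ℂ}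
    (hF : Differentiable ℂ F) (h₁ : Function.Periodic F L.ω₁) (h₂ : Function.Periodic F L.ω₂)
    (z w : ℂ) : F z = F w := by
  have hL : ∀ γ ∈ L.lattice, Function.Periodic F γ := by
    intro γ hγ
    obtain ⟨m, n, rfl⟩ := Submodule.mem_span_pair.mp hγ
    exact (h₁.zsmul m).add_period (h₂.zsmul n)
  have hfract : ∀ z, F (ZSpan.fract L.basis z) = F z := by
    intro z
    have hfloor : (ZSpan.floor L.basis z : ℂ) ∈ L.lattice := by
      rw [L.lattice_eq_span_range_basis]
      exact (ZSpan.floor L.basis z).2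
    rw [ZSpan.fract_apply, sub_eq_add_neg, hL _ (neg_mem hfloor)]
  refine hF.apply_eq_apply_of_bounded ?_ z w
  refine ((isCompact_closedBall 0 (∑ i, ‖L.basis i‖)).image hF.continuous).isBounded.subset ?_
  rintro _ ⟨z, rfl⟩
  exact ⟨ZSpan.fract L.basis z, mem_closedBall_zero_iff.mpr (ZSpan.norm_fract_le _ _), hfract z⟩

lemma exists_reflect_eq_mul (hη : η ^ 2 = 1) (hpar : ∀ z, f (-z) = η * f z)
    (hα : α ^ 2 = 1) (h₁ : ∀ z, f (z + 2 * L.ω₁) = α * f z)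
    (hβ : β ^ 2 = 1) (h₂ : ∀ z, f (z + 2 * L.ω₂) = β * f z) {q : ℂ} (hq : q ∈ L.lattice) :
    ∃ c : ℂ, c ^ 2 = 1 ∧ ∀ z, f (2 * q - z) = c * f z := by
  rw [← Submodule.mem_toAddSubgroup, lattice, Submodule.span_int_eq_addSubgroupClosure] at hq
  induction hq using AddSubgroup.closure_induction with
  | mem x hx =>
    rcases hx with rfl | rfl
    · refine ⟨α * η, by rw [mul_pow, hα, hη, one_mul], fun z => ?_⟩
      rw [sub_eq_neg_add, h₁, hpar, mul_assoc]
    · refine ⟨β * η, by rw [mul_pow, hβ, hη, one_mul], fun z => ?_⟩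
      rw [sub_eq_neg_add, h₂, hpar, mul_assoc]
  | zero => exact ⟨η, hη, fun z => by rw [mul_zero, zero_sub, hpar]⟩
  | add p q _ _ hp hq =>
    obtain ⟨c, hc, hpc⟩ := hp
    obtain ⟨d, hd, hqd⟩ := hq
    refine ⟨c * η * d, by rw [mul_pow, mul_pow, hc, hη, hd, one_mul, one_mul], fun z => ?_⟩
    rw [show 2 * (p + q) - z = 2 * p - -(2 * q - z) by ring, hpc, hpar, hqd]
    ring
  | neg q _ hq =>
    obtain ⟨c, hc, hqc⟩ := hq
    refine ⟨c, hc, fun z => ?_⟩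
    rw [show 2 * -q - z = -(2 * q - -z) by ring, hpar, hqc, hpar]
    linear_combination (c * f z) * hη

-- The reflection signs about `q` and `q + L.ω₁` differ by the monodromy `-1` along `2 L.ω₁`.
lemma reflect_eq_or_reflect_add_eq (hη : η ^ 2 = 1) (hpar : ∀ z, f (-z) = η * f z)
    (h₁ : Function.Antiperiodic f (2 * L.ω₁))
    (hβ : β ^ 2 = 1) (h₂ : ∀ z, f (z + 2 * L.ω₂) = β * f z) {q : ℂ} (hq : q ∈ L.lattice) :
    (∀ z, f (2 * q - z) = f z) ∨ ∀ z, f (2 * q - z + L.ω₁) = f (z + L.ω₁) := by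
  obtain ⟨c, hc, hqc⟩ := L.exists_reflect_eq_mul hη hpar (α := -1) (by norm_num)
    (fun z => by rw [h₁ z, neg_one_mul]) hβ h₂ hq
  rcases sq_eq_one_iff.mp hc with rfl | rfl
  · exact Or.inl fun z => by rw [hqc, one_mul]
  · refine Or.inr fun z => ?_
    rw [show 2 * q - z + L.ω₁ = 2 * q - (z + L.ω₁) + 2 * L.ω₁ by ring, h₁, hqc]
    ring

lemma tendsto_mul_add_nhdsNE_zero (hf : DifferentiableOn ℂ f (L.lattice : Set ℂ)ᶜ)
    (hpole : ∀ q ∈ L.lattice, SimplePoleNoConstAt f q)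
    (hη : η ^ 2 = 1) (hpar : ∀ z, f (-z) = η * f z) (h₁ : Function.Antiperiodic f (2 * L.ω₁))
    (hβ : β ^ 2 = 1) (h₂ : ∀ z, f (z + 2 * L.ω₂) = β * f z) {q : ℂ} (hq : q ∈ L.lattice) :
    Tendsto (fun z => f z * f (z + L.ω₁)) (𝓝[≠] q) (𝓝 0) := by
  have hdiff : ∀ z ∉ L.lattice, DifferentiableAt ℂ f z :=
    fun z hz => hf.differentiableAt (L.isClosed_lattice.isOpen_compl.mem_nhds hz)
  have hd : ∀ᶠ z in 𝓝[≠] q, DifferentiableAt ℂ f z := by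
    filter_upwards [L.eventually_notMem_lattice q] with z hz using hdiff z hz
  have hd' : ∀ᶠ z in 𝓝[≠] q, DifferentiableAt ℂ (fun z => f (z + L.ω₁)) z := by
    filter_upwards [L.eventually_notMem_lattice q] with z hz
    exact (hdiff _ fun h => hz ((add_mem_cancel_right L.ω₁_mem_lattice).mp h)).comp z
      (differentiableAt_id.add_const _)
  have hpole' : SimplePoleNoConstAt (fun z => f (z + L.ω₁)) q :=
    (hpole _ (add_mem hq L.ω₁_mem_lattice)).comp_add_const L.ω₁
  rcases L.reflect_eq_or_reflect_add_eq hη hpar h₁ hβ h₂ hq with h | h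
  · exact hpole'.tendsto_mul_of_tendsto_div_sub ((hpole q hq).tendsto_div_sub_of_reflect hd h)
  · simpa only [mul_comm] using
      (hpole q hq).tendsto_mul_of_tendsto_div_sub (hpole'.tendsto_div_sub_of_reflect hd' h)

lemma eq_zero_of_antiperiodic_of_parity (hf : DifferentiableOn ℂ f (L.lattice : Set ℂ)ᶜ)
    (hpole : ∀ q ∈ L.lattice, SimplePoleNoConstAt f q)
    (hη : η ^ 2 = 1) (hpar : ∀ z, f (-z) = η * f z) (h₁ : Function.Antiperiodic f (2 * L.ω₁))
    (hβ : β ^ 2 = 1) (h₂ : ∀ z, f (z + 2 * L.ω₂) = β * f z) :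
    ∀ z ∉ L.lattice, f z = 0 := by
  have hopen : IsOpen (L.lattice : Set ℂ)ᶜ := L.isClosed_lattice.isOpen_compl
  have hshift : MapsTo (· + L.ω₁) (L.lattice : Set ℂ)ᶜ (L.lattice : Set ℂ)ᶜ :=
    fun z hz h => hz ((add_mem_cancel_right L.ω₁_mem_lattice).mp h)
  have hf' : DifferentiableOn ℂ (fun z => f (z + L.ω₁)) (L.lattice : Set ℂ)ᶜ :=
    hf.comp (differentiableOn_id.add_const _) hshift
  set g : ℂ → ℂ := fun z => f z * f (z + L.ω₁) with hg
  have hFdiff : Differentiable ℂ ((L.lattice : Set ℂ)ᶜ.indicator g) :=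
    L.differentiable_indicator_compl_lattice (hf.mul hf')
      fun q hq => L.tendsto_mul_add_nhdsNE_zero hf hpole hη hpar h₁ hβ h₂ hq
  have hF₁ : Function.Periodic ((L.lattice : Set ℂ)ᶜ.indicator g) (2 * L.ω₁) := by
    refine fun z => (Set.indicator_compl_add_eq_mul (L.two_mul_mem_lattice L.ω₁_mem_lattice)
      (fun z _ => ?_) z).trans (one_mul _)
    simp only [hg]
    rw [add_right_comm, h₁, h₁, neg_mul_neg, one_mul]
  have hF₂ : Function.Periodic ((L.lattice : Set ℂ)ᶜ.indicator g) (2 * L.ω₂) := by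
    refine fun z => (Set.indicator_compl_add_eq_mul (L.two_mul_mem_lattice L.ω₂_mem_lattice)
      (fun z _ => ?_) z).trans (one_mul _)
    simp only [hg]
    rw [add_right_comm, h₂, h₂]
    linear_combination (f z * f (z + L.ω₁)) * hβ
  have hprod : ∀ z ∈ (L.lattice : Set ℂ)ᶜ, f z * f (z + L.ω₁) = 0 := fun z hz => by
    have hconst := hFdiff.apply_eq_apply_of_periodic L.double hF₁ hF₂ z 0
    rw [indicator_of_mem hz, indicator_of_notMem (by simp : (0 : ℂ) ∉ (L.lattice : Set ℂ)ᶜ)]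
      at hconst
    exact hconst
  rcases (hf.analyticOnNhd hopen).eq_zero_or_eq_zero_of_mul_eq_zero (hf'.analyticOnNhd hopen)
    hprod L.isPreconnected_compl_lattice with h | h
  · exact h
  · intro z hz
    simpa using h (z - L.ω₁) fun h' => hz (by simpa using add_mem h' L.ω₁_mem_lattice)

lemma eq_zero_of_antiperiodic (hf : DifferentiableOn ℂ f (L.lattice : Set ℂ)ᶜ)
    (hpole : ∀ q ∈ L.lattice, SimplePoleNoConstAt f q) (h₁ : Function.Antiperiodic f (2 * L.ω₁))
    (hβ : β ^ 2 = 1) (h₂ : ∀ z, f (z + 2 * L.ω₂) = β * f z) :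
    ∀ z ∉ L.lattice, f z = 0 := by
  have h₂' : ∀ z, f (z - 2 * L.ω₂) = β * f z := fun z => by
    rw [← sub_add_cancel z (2 * L.ω₂), h₂, add_sub_cancel_right]
    linear_combination (-f (z - 2 * L.ω₂)) * hβ
  have hneg : DifferentiableOn ℂ (fun z => f (-z)) (L.lattice : Set ℂ)ᶜ :=
    hf.comp (differentiableOn_neg _) fun z hz h => hz (by simpa using neg_mem h)
  have hsym : ∀ η : ℂ, η ^ 2 = 1 → ∀ z ∉ L.lattice, f z + η * f (-z) = 0 := fun η hη =>
    L.eq_zero_of_antiperiodic_of_parity (f := fun z => f z + η * f (-z))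
      (hf.add (hneg.const_mul η))
      (fun q hq => (hpole q hq).add (((hpole (-q) (neg_mem hq)).comp_neg).const_mul η)) hη
      (fun z => by rw [neg_neg]; linear_combination (-f (-z)) * hη)
      (fun z => by beta_reduce; rw [h₁ z, neg_add', h₁.sub_eq]; ring) hβ
      (fun z => by rw [h₂ z, neg_add', h₂']; ring)
  intro z hz
  linear_combination (hsym 1 (one_pow 2) z hz + hsym (-1) (by norm_num) z hz) / 2

lemma eq_zero_of_nontrivial_monodromy {ε₁ ε₂ : ℂ} (hε₁ : ε₁ = 1 ∨ ε₁ = -1)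
    (hε₂ : ε₂ = 1 ∨ ε₂ = -1) (hnontriv : ¬(ε₁ = 1 ∧ ε₂ = 1))
    (hf : DifferentiableOn ℂ f (L.lattice : Set ℂ)ᶜ)
    (hpole : ∀ q ∈ L.lattice, SimplePoleNoConstAt f q)
    (h₁ : ∀ z ∉ L.lattice, f (z + 2 * L.ω₁) = ε₁ * f z)
    (h₂ : ∀ z ∉ L.lattice, f (z + 2 * L.ω₂) = ε₂ * f z) :
    ∀ z ∉ L.lattice, f z = 0 := by
  -- `f` is arbitrary on the lattice; replacing it by `0` there makes the monodromy global.
  set t := (L.lattice : Set ℂ)ᶜ.indicator f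
  have htf : ∀ z ∉ L.lattice, t z = f z := fun z hz => indicator_of_mem hz f
  have ht : DifferentiableOn ℂ t (L.lattice : Set ℂ)ᶜ := hf.congr htf
  have htpole : ∀ q ∈ L.lattice, SimplePoleNoConstAt t q := fun q hq =>
    (hpole q hq).congr <| by
      filter_upwards [L.eventually_notMem_lattice q] with z hz using (htf z hz).symm
  have ht₁ : ∀ z, t (z + 2 * L.ω₁) = ε₁ * t z :=
    Set.indicator_compl_add_eq_mul (L.two_mul_mem_lattice L.ω₁_mem_lattice) h₁
  have ht₂ : ∀ z, t (z + 2 * L.ω₂) = ε₂ * t z :=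
    Set.indicator_compl_add_eq_mul (L.two_mul_mem_lattice L.ω₂_mem_lattice) h₂
  intro z hz
  rw [← htf z hz]
  rcases hε₁ with rfl | rfl
  · obtain rfl : ε₂ = -1 := hε₂.resolve_left fun h => hnontriv ⟨rfl, h⟩
    rw [← L.lattice_swap] at ht htpole hz
    exact L.swap.eq_zero_of_antiperiodic ht htpole (fun z => (ht₂ z).trans (neg_one_mul _))
      (one_pow 2) ht₁ z hz
  · exact L.eq_zero_of_antiperiodic ht htpole (fun z => (ht₁ z).trans (neg_one_mul _))
      (sq_eq_one_iff.mpr hε₂) ht₂ z hz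

end PeriodPair

/-- For a non-trivial spin structure `(ε₁, ε₃) ≠ (1, 1)`, any function holomorphic away
from the half-period set `H`, with monodromy `ε₁`, `ε₃` in the directions `4ω₁`, `4ω₃`,
and at most simple poles with vanishing constant Laurent terms at the points of `H`,
vanishes identically. -/
theorem four_ends_nontrivial_spin_no_solution
    (ω₁ ω₃ : ℂ) (hind : LinearIndependent ℝ ![ω₁, ω₃])
    (ε₁ ε₃ : ℂ) (hε₁ : ε₁ = 1 ∨ ε₁ = -1) (hε₃ : ε₃ = 1 ∨ ε₃ = -1)
    (hnontriv : ¬(ε₁ = 1 ∧ ε₃ = 1))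
    (s : ℂ → ℂ)
    (hhol : DifferentiableOn ℂ s (Hset ω₁ ω₃)ᶜ)
    (hmon₁ : ∀ z ∉ Hset ω₁ ω₃, s (z + 4 * ω₁) = ε₁ * s z)
    (hmon₃ : ∀ z ∉ Hset ω₁ ω₃, s (z + 4 * ω₃) = ε₃ * s z)
    (hpole : ∀ q ∈ Hset ω₁ ω₃, ∃ r : ℂ,
      Tendsto (fun z => s z - r / (z - q)) (𝓝[≠] q) (𝓝 0)) :
    ∀ z ∉ Hset ω₁ ω₃, s z = 0 := by
  set L : PeriodPair := PeriodPair.double ⟨ω₁, ω₃, hind⟩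
  have hH : Hset ω₁ ω₃ = L.lattice := Hset_eq_span ω₁ ω₃
  have h₄ : 4 * ω₁ = 2 * L.ω₁ ∧ 4 * ω₃ = 2 * L.ω₂ := by
    constructor <;> simp only [L, PeriodPair.double] <;> ring
  rw [hH, h₄.1] at hmon₁
  rw [hH, h₄.2] at hmon₃
  rw [hH] at hhol hpole ⊢
  exact L.eq_zero_of_nontrivial_monodromy hε₁ hε₃ hnontriv hhol hpole hmon₁ hmon₃
end
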